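/- arXiv:2511.01420 — 5 statements merged into one kernel-verified Lean document; each statement's English description precedes it below -/
import Mathlib

section
/- If the slow condition holds at node v at time t on some level s ∈ ℕ (i.e., some neighbor w of v satisfies L_v(t)−L_w(t)−O_{v,w} ≥ 4s·δ_{v,w} and every neighbor w of v satisfies L_v(t)−L_w(t)−O_{v,w} ≥ −4s·δ_{v,w}), then the slow trigger holds at v at time t on the same level s (i.e., some neighbor w satisfies o_{v,w}(t) > (4s−1)·δ_{v,w} and every neighbor w satisfies o_{v,w}(t) > −(4s+1)·δ_{v,w}). Likewise, if the fast condition holds at v at time t on some level s ∈ ℕ (some neighbor w satisfies L_v(t)−L_w(t)−O_{v,w} ≤ −(4s+2)·δ_{v,w} and every neighbor w satisfies L_v(t)−L_w(t)−O_{v,w} ≤ (4s+2)·δ_{v,w}), then the fast trigger holds at v at time t on the same level s (some neighbor w satisfies o_{v,w}(t) < −(4s+1)·δ_{v,w} and every neighbor w satisfies o_{v,w}(t) < (4s+3)·δ_{v,w}). -/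
open SimpleGraph

namespace GCS

variable {V : Type*}

def edgeWt (δ O : V → V → ℝ) (s : ℝ) (v w : V) : ℝ :=
  4 * s * δ v w - O v w

def walkWt {G : SimpleGraph V} (δ O : V → V → ℝ) (s : ℝ) {v w : V}
    (p : G.Walk v w) : ℝ :=
  (p.darts.map fun d => edgeWt δ O s d.toProd.1 d.toProd.2).sum

def NonnegCycles (G : SimpleGraph V) (δ O : V → V → ℝ) (s : ℝ) : Prop :=
  ∀ (v : V) (c : G.Walk v v), c.IsCycle → 0 ≤ walkWt δ O s c

noncomputable def dS (G : SimpleGraph V) (δ O : V → V → ℝ) (s : ℝ) (v w : V) : ℝ :=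
  sInf {x : ℝ | ∃ p : G.Walk v w, walkWt δ O s p = x}

noncomputable def Psi (G : SimpleGraph V) (δ O : V → V → ℝ) (s : ℝ)
    (L : V → ℝ → ℝ) (v : V) (t : ℝ) : ℝ :=
  sSup {x : ℝ | ∃ w : V, ∃ p : G.Walk v w, x = L w t - L v t - walkWt δ O s p}

noncomputable def PsiAll (G : SimpleGraph V) (δ O : V → V → ℝ) (s : ℝ)
    (L : V → ℝ → ℝ) (t : ℝ) : ℝ :=
  ⨆ v : V, Psi G δ O s L v t

noncomputable def PsiE (G : SimpleGraph V) (δ O : V → V → ℝ) (s : ℝ)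
    (L : V → ℝ → ℝ) (v : V) (t : ℝ) : EReal :=
  ⨆ w : V, ⨆ p : G.Walk v w, ((L w t - L v t - walkWt δ O s p : ℝ) : EReal)

def SlowCondAt (G : SimpleGraph V) (δ O : V → V → ℝ) (L : V → ℝ → ℝ)
    (v : V) (t : ℝ) (s : ℕ) : Prop :=
  (∃ w, G.Adj v w ∧ 4 * (s : ℝ) * δ v w ≤ L v t - L w t - O v w) ∧
  (∀ w, G.Adj v w → -(4 * (s : ℝ) * δ v w) ≤ L v t - L w t - O v w)

def FastCondAt (G : SimpleGraph V) (δ O : V → V → ℝ) (L : V → ℝ → ℝ)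
    (v : V) (t : ℝ) (s : ℕ) : Prop :=
  (∃ w, G.Adj v w ∧ L v t - L w t - O v w ≤ -((4 * (s : ℝ) + 2) * δ v w)) ∧
  (∀ w, G.Adj v w → L v t - L w t - O v w ≤ (4 * (s : ℝ) + 2) * δ v w)

def Admissible (G : SimpleGraph V) (δ O : V → V → ℝ) (L : V → ℝ → ℝ)
    (ϑ μ : ℝ) : Prop :=
  ∀ (v : V) (t : ℝ),
    ((∃ s : ℕ, SlowCondAt G δ O L v t s) → deriv (L v) t ≤ ϑ) ∧
    ((∃ s : ℕ, FastCondAt G δ O L v t s) → 1 + μ ≤ deriv (L v) t)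

def AdmissibleOn (G : SimpleGraph V) (δ O : V → V → ℝ) (L : V → ℝ → ℝ)
    (ϑ μ : ℝ) (a b : ℝ) : Prop :=
  ∀ (v : V), ∀ t ∈ Set.Icc a b,
    ((∃ s : ℕ, SlowCondAt G δ O L v t s) → deriv (L v) t ≤ ϑ) ∧
    ((∃ s : ℕ, FastCondAt G δ O L v t s) → 1 + μ ≤ deriv (L v) t)

end GCS

/-! Since `|(L_v - L_w - o_{v,w}) - O_{v,w}| < δ_{v,w}`, the estimate `o_{v,w}` lies within
`δ_{v,w}` of `L_v - L_w - O_{v,w}`; every threshold of a condition therefore moves by less than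
one `δ_{v,w}`, which is exactly the gap between the condition and the trigger. -/

namespace GCS

variable {V : Type*}

def SlowTriggerAt (G : SimpleGraph V) (δ : V → V → ℝ) (o : V → V → ℝ → ℝ)
    (v : V) (t : ℝ) (s : ℕ) : Prop :=
  (∃ w, G.Adj v w ∧ (4 * (s : ℝ) - 1) * δ v w < o v w t) ∧
  (∀ w, G.Adj v w → -((4 * (s : ℝ) + 1) * δ v w) < o v w t)

def FastTriggerAt (G : SimpleGraph V) (δ : V → V → ℝ) (o : V → V → ℝ → ℝ)
    (v : V) (t : ℝ) (s : ℕ) : Prop :=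
  (∃ w, G.Adj v w ∧ o v w t < -((4 * (s : ℝ) + 1) * δ v w)) ∧
  (∀ w, G.Adj v w → o v w t < (4 * (s : ℝ) + 3) * δ v w)

section Triggers

variable {G : SimpleGraph V} {δ O : V → V → ℝ} {L : V → ℝ → ℝ} {o : V → V → ℝ → ℝ}
  {v : V} {t : ℝ} {s : ℕ}

theorem SlowCondAt.slowTriggerAt
    (herr : ∀ w, G.Adj v w → |(L v t - L w t - o v w t) - O v w| < δ v w)
    (h : SlowCondAt G δ O L v t s) : SlowTriggerAt G δ o v t s := by
  obtain ⟨⟨w, hvw, hw⟩, hall⟩ := h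
  refine ⟨⟨w, hvw, ?_⟩, fun u hvu => ?_⟩
  · linarith [(abs_lt.mp (herr w hvw)).2]
  · linarith [(abs_lt.mp (herr u hvu)).2, hall u hvu]

theorem FastCondAt.fastTriggerAt
    (herr : ∀ w, G.Adj v w → |(L v t - L w t - o v w t) - O v w| < δ v w)
    (h : FastCondAt G δ O L v t s) : FastTriggerAt G δ o v t s := by
  obtain ⟨⟨w, hvw, hw⟩, hall⟩ := h
  refine ⟨⟨w, hvw, ?_⟩, fun u hvu => ?_⟩
  · linarith [(abs_lt.mp (herr w hvw)).1]
  · linarith [(abs_lt.mp (herr u hvu)).1, hall u hvu]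

end Triggers

end GCS

theorem slow_fast_condition_implies_trigger_general
    {V : Type*}
    (G : SimpleGraph V)
    (δ O : V → V → ℝ)
    (L : V → ℝ → ℝ) (o : V → V → ℝ → ℝ) (t : ℝ)
    (herr : ∀ v w, G.Adj v w → |(L v t - L w t - o v w t) - O v w| < δ v w)
    (v : V) (s : ℕ) :
    ((((∃ w, G.Adj v w ∧ 4 * (s : ℝ) * δ v w ≤ L v t - L w t - O v w) ∧
       (∀ w, G.Adj v w → -(4 * (s : ℝ) * δ v w) ≤ L v t - L w t - O v w)) →
      ((∃ w, G.Adj v w ∧ (4 * (s : ℝ) - 1) * δ v w < o v w t) ∧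
       (∀ w, G.Adj v w → -((4 * (s : ℝ) + 1) * δ v w) < o v w t)))
     ∧
     (((∃ w, G.Adj v w ∧ L v t - L w t - O v w ≤ -((4 * (s : ℝ) + 2) * δ v w)) ∧
       (∀ w, G.Adj v w → L v t - L w t - O v w ≤ (4 * (s : ℝ) + 2) * δ v w)) →
      ((∃ w, G.Adj v w ∧ o v w t < -((4 * (s : ℝ) + 1) * δ v w)) ∧
       (∀ w, G.Adj v w → o v w t < (4 * (s : ℝ) + 3) * δ v w)))) :=
  ⟨GCS.SlowCondAt.slowTriggerAt (herr v), GCS.FastCondAt.fastTriggerAt (herr v)⟩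

/-- the slow (fast) condition on level `s` implies the slow (fast)
trigger on the same level `s`. -/
theorem slow_fast_condition_implies_trigger
    {V : Type*} [Fintype V] [DecidableEq V] [Nonempty V]
    (G : SimpleGraph V) (hconn : G.Connected)
    (δ O : V → V → ℝ)
    (hδpos : ∀ v w, G.Adj v w → 0 < δ v w)
    (hδsym : ∀ v w, G.Adj v w → δ v w = δ w v)
    (hOanti : ∀ v w, G.Adj v w → O v w = -O w v)
    (L : V → ℝ → ℝ) (o : V → V → ℝ → ℝ) (t : ℝ)
    (herr : ∀ v w, G.Adj v w → |(L v t - L w t - o v w t) - O v w| < δ v w)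
    (v : V) (s : ℕ) :
    ((((∃ w, G.Adj v w ∧ 4 * (s : ℝ) * δ v w ≤ L v t - L w t - O v w) ∧
       (∀ w, G.Adj v w → -(4 * (s : ℝ) * δ v w) ≤ L v t - L w t - O v w)) →
      ((∃ w, G.Adj v w ∧ (4 * (s : ℝ) - 1) * δ v w < o v w t) ∧
       (∀ w, G.Adj v w → -((4 * (s : ℝ) + 1) * δ v w) < o v w t)))
     ∧
     (((∃ w, G.Adj v w ∧ L v t - L w t - O v w ≤ -((4 * (s : ℝ) + 2) * δ v w)) ∧
       (∀ w, G.Adj v w → L v t - L w t - O v w ≤ (4 * (s : ℝ) + 2) * δ v w)) →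
      ((∃ w, G.Adj v w ∧ o v w t < -((4 * (s : ℝ) + 1) * δ v w)) ∧
       (∀ w, G.Adj v w → o v w t < (4 * (s : ℝ) + 3) * δ v w)))) :=
  slow_fast_condition_implies_trigger_general G δ O L o t herr v s
end

section
/- At any node v and time t, the slow trigger and the fast trigger are mutually exclusive: there do not exist levels s, s' ∈ ℕ such that the slow trigger holds at v at time t on level s and the fast trigger holds at v at time t on level s'. -/
open SimpleGraph

/-!
At a neighbour witnessing the slow trigger on level `s`, the fast trigger's upper bound forces
`4s - 1 < 4s' + 3`, i.e. `s ≤ s'`; at a neighbour witnessing the fast trigger on level `s'`, the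
slow trigger's lower bound forces `4s' + 1 < 4s + 1`, i.e. `s' < s`.
-/

lemma slow_level_le_fast_level {s s' : ℕ} {δ x : ℝ}
    (hδ : 0 < δ) (hlow : (4 * (s : ℝ) - 1) * δ < x) (hup : x < (4 * (s' : ℝ) + 3) * δ) :
    s ≤ s' := by
  have hlt : 4 * (s : ℝ) - 1 < 4 * s' + 3 := lt_of_mul_lt_mul_right (hlow.trans hup) hδ.le
  have : (s : ℝ) < s' + 1 := by linarith
  exact Nat.lt_succ_iff.mp (by exact_mod_cast this)

lemma fast_level_lt_slow_level {s s' : ℕ} {δ x : ℝ}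
    (hδ : 0 < δ) (hlow : -((4 * (s : ℝ) + 1) * δ) < x) (hup : x < -((4 * (s' : ℝ) + 1) * δ)) :
    s' < s := by
  have hlt : (4 * (s' : ℝ) + 1) * δ < (4 * s + 1) * δ := by linarith
  have : (s' : ℝ) < s := by linarith [lt_of_mul_lt_mul_right hlt hδ.le]
  exact_mod_cast this

theorem slow_fast_trigger_mutually_exclusive_general
    {V : Type*}
    (G : SimpleGraph V)
    (δ : V → V → ℝ)
    (hδpos : ∀ v w, G.Adj v w → 0 < δ v w)
    (o : V → V → ℝ → ℝ) (v : V) (t : ℝ) :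
    ¬ ∃ s s' : ℕ,
      (((∃ w, G.Adj v w ∧ (4 * (s : ℝ) - 1) * δ v w < o v w t) ∧
        (∀ w, G.Adj v w → -((4 * (s : ℝ) + 1) * δ v w) < o v w t)) ∧
       ((∃ w, G.Adj v w ∧ o v w t < -((4 * (s' : ℝ) + 1) * δ v w)) ∧
        (∀ w, G.Adj v w → o v w t < (4 * (s' : ℝ) + 3) * δ v w))) := by
  rintro ⟨s, s', ⟨⟨w, hw, hslow⟩, hslow_all⟩, ⟨u, hu, hfast⟩, hfast_all⟩
  have hle : s ≤ s' := slow_level_le_fast_level (hδpos v w hw) hslow (hfast_all w hw)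
  have hlt : s' < s := fast_level_lt_slow_level (hδpos v u hu) (hslow_all u hu) hfast
  exact (hle.trans_lt hlt).false

/-- the slow trigger and the fast trigger are mutually exclusive. -/
theorem slow_fast_trigger_mutually_exclusive
    {V : Type*} [Fintype V] [DecidableEq V] [Nonempty V]
    (G : SimpleGraph V)
    (δ : V → V → ℝ)
    (hδpos : ∀ v w, G.Adj v w → 0 < δ v w)
    (hδsym : ∀ v w, G.Adj v w → δ v w = δ w v)
    (o : V → V → ℝ → ℝ) (v : V) (t : ℝ) :
    ¬ ∃ s s' : ℕ,
      (((∃ w, G.Adj v w ∧ (4 * (s : ℝ) - 1) * δ v w < o v w t) ∧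
        (∀ w, G.Adj v w → -((4 * (s : ℝ) + 1) * δ v w) < o v w t)) ∧
       ((∃ w, G.Adj v w ∧ o v w t < -((4 * (s' : ℝ) + 1) * δ v w)) ∧
        (∀ w, G.Adj v w → o v w t < (4 * (s' : ℝ) + 3) * δ v w))) :=
  slow_fast_trigger_mutually_exclusive_general G δ hδpos o v t
end

section
/- Assume the execution is admissible. Let s ∈ ℕ be such that every directed cycle has nonnegative ω^s-weight, let v ∈ V, and let t < t' be times such that Ψ_v^s(τ) > 0 for all τ ∈ (t,t'). Then Ψ_v^s(t') ≤ Ψ_v^s(t) + ϑ·(t'−t) − (L_v(t') − L_v(t)). -/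
open SimpleGraph

/-!
Along a path `p` from `v` to `w`, `L_w - ω^s(p)` is a differentiable function of time, and
`Ψ_v^s + L_v` is the maximum of these finitely many functions: since cycles have nonnegative
weight, short-cutting a walk to a path does not increase its weight. While `Ψ_v^s > 0`, a maximizing
path is nonempty, and comparing it with its truncation and its one-edge extensions shows that its
endpoint `w` satisfies the slow condition, so `L_w` grows at rate at most `ϑ`. A maximum of
functions each of which grows at rate at most `ϑ` while it is maximal grows at rate at most `ϑ`.
-/

section SupSlope

open Filter Topology Set

lemma slope_lt_iff_lt_add_mul {f : ℝ → ℝ} {x z r : ℝ} (hxz : x < z) :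
    slope f x z < r ↔ f z < f x + r * (z - x) := by
  rw [slope_def_field, div_lt_iff₀ (sub_pos.2 hxz)]
  constructor <;> intro h <;> linarith

theorem le_add_mul_sub_of_slope_right_le {f : ℝ → ℝ} {a b C : ℝ} (hab : a < b)
    (hf : ContinuousOn f (Icc a b))
    (bound : ∀ x ∈ Ioo a b, ∀ r, C < r → ∃ᶠ z in 𝓝[>] x, slope f x z < r) :
    f b ≤ f a + C * (b - a) := by
  have hc : ∀ c ∈ Ioo a b, f b ≤ f c + C * (b - c) := fun c hc =>
    image_le_of_liminf_slope_right_le_deriv_boundary (hf.mono (Icc_subset_Icc_left hc.1.le))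
      (by simp) (by fun_prop)
      (fun x _ => (((hasDerivWithinAt_id x _).sub_const c).const_mul C).const_add (f c)
        |>.congr_deriv (mul_one C))
      (fun x hx => bound x ⟨hc.1.trans_le hx.1, hx.2⟩) (right_mem_Icc.2 hc.2.le)
  have := left_nhdsWithin_Ioo_neBot hab
  have hlim : Tendsto (fun c => f c + C * (b - c)) (𝓝[Ioo a b] a) (𝓝 (f a + C * (b - a))) :=
    ((hf a (left_mem_Icc.2 hab.le)).mono Ioo_subset_Icc_self).add
      (continuous_const.mul (continuous_const.sub continuous_id)).continuousWithinAt
  exact ge_of_tendsto hlim (eventually_nhdsWithin_of_forall hc)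

section FinsetSup

variable {ι : Type*} {s : Finset ι} (hs : s.Nonempty) {f : ι → ℝ → ℝ}

theorem eventually_slope_finset_sup'_lt {x C r : ℝ} (hcont : ∀ i ∈ s, ContinuousAt (f i) x)
    (hderiv : ∀ i ∈ s, f i x = s.sup' hs (f · x) →
      DifferentiableAt ℝ (f i) x ∧ deriv (f i) x ≤ C)
    (hr : C < r) :
    ∀ᶠ z in 𝓝[>] x, slope (fun y => s.sup' hs (f · y)) x z < r := by
  have hall : ∀ i ∈ s, ∀ᶠ z in 𝓝[>] x, f i z < s.sup' hs (f · x) + r * (z - x) := by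
    intro i hi
    rcases (Finset.le_sup' (f · x) hi).eq_or_lt with hact | hlt
    · obtain ⟨hdiff, hle⟩ := hderiv i hi hact
      have hslope : ∀ᶠ z in 𝓝[≠] x, slope (f i) x z < r :=
        (hasDerivAt_iff_tendsto_slope.1 hdiff.hasDerivAt).eventually_lt_const (hle.trans_lt hr)
      filter_upwards [hslope.filter_mono (nhdsWithin_mono _ fun z hz => ne_of_gt hz),
        self_mem_nhdsWithin] with z hz hxz
      rwa [← hact, ← slope_lt_iff_lt_add_mul hxz]
    · have hlim : Tendsto (fun z => f i z - r * (z - x)) (𝓝 x) (𝓝 (f i x - r * (x - x))) :=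
        (hcont i hi).sub (by fun_prop)
      rw [sub_self, mul_zero, sub_zero] at hlim
      filter_upwards [(hlim.eventually_lt_const hlt).filter_mono nhdsWithin_le_nhds] with z hz
      linarith
  filter_upwards [(eventually_all_finset s).2 hall, self_mem_nhdsWithin] with z hz hxz
  rw [slope_lt_iff_lt_add_mul hxz]
  exact (Finset.sup'_lt_iff hs).2 hz

theorem finset_sup'_le_add_mul_sub {a b C : ℝ} (hab : a < b)
    (hcont : ∀ i ∈ s, ContinuousOn (f i) (Icc a b))
    (hderiv : ∀ x ∈ Ioo a b, ∀ i ∈ s, f i x = s.sup' hs (f · x) →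
      DifferentiableAt ℝ (f i) x ∧ deriv (f i) x ≤ C) :
    s.sup' hs (f · b) ≤ s.sup' hs (f · a) + C * (b - a) :=
  le_add_mul_sub_of_slope_right_le hab (ContinuousOn.finset_sup'_apply hs hcont)
    fun x hx _ hr => (eventually_slope_finset_sup'_lt hs
      (fun i hi => (hcont i hi).continuousAt (Icc_mem_nhds hx.1 hx.2)) (hderiv x hx) hr).frequently

end FinsetSup

end SupSlope

namespace GCS

variable {V : Type*} {G : SimpleGraph V} {δ O : V → V → ℝ} {s : ℝ}

@[simp]
lemma walkWt_nil {v : V} : walkWt δ O s (Walk.nil : G.Walk v v) = 0 := rfl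

@[simp]
lemma walkWt_cons {u v w : V} (h : G.Adj u v) (p : G.Walk v w) :
    walkWt δ O s (Walk.cons h p) = edgeWt δ O s u v + walkWt δ O s p := by
  simp [walkWt]

lemma walkWt_append {u v w : V} (p : G.Walk u v) (q : G.Walk v w) :
    walkWt δ O s (p.append q) = walkWt δ O s p + walkWt δ O s q := by
  simp [walkWt, Walk.darts_append]

lemma walkWt_concat {u v w : V} (p : G.Walk u v) (h : G.Adj v w) :
    walkWt δ O s (p.concat h) = walkWt δ O s p + edgeWt δ O s v w := by
  simp [Walk.concat_eq_append, walkWt_append]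

lemma edgeWt_add_edgeWt_swap_nonneg (hδpos : ∀ v w, G.Adj v w → 0 < δ v w)
    (hδsym : ∀ v w, G.Adj v w → δ v w = δ w v) (hOanti : ∀ v w, G.Adj v w → O v w = -O w v)
    (hs : 0 ≤ s) {u v : V} (h : G.Adj u v) :
    0 ≤ edgeWt δ O s u v + edgeWt δ O s v u := by
  have := mul_nonneg (mul_nonneg zero_le_four hs) (hδpos u v h).le
  simp only [edgeWt, hδsym u v h, hOanti u v h] at this ⊢
  linarith

section NonnegClosedWalks

-- Walks `u, v, u` are not cycles of a simple graph, so `NonnegCycles` says nothing about them.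
variable (hpair : ∀ u v, G.Adj u v → 0 ≤ edgeWt δ O s u v + edgeWt δ O s v u)
  (hnc : NonnegCycles G δ O s)
include hpair hnc

lemma edgeWt_add_walkWt_path_nonneg {a b : V} (h : G.Adj a b) {q : G.Walk b a} (hq : q.IsPath) :
    0 ≤ edgeWt δ O s a b + walkWt δ O s q := by
  by_cases he : s(a, b) ∈ q.edges
  · cases q with
    | nil => simp at he
    | @cons _ c _ h' r =>
      rw [Walk.cons_isPath_iff] at hq
      rw [Walk.edges_cons, List.mem_cons] at he
      rcases he with he | he
      · rcases Sym2.eq_iff.1 he with ⟨rfl, rfl⟩ | ⟨rfl, -⟩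
        · exact absurd rfl h.ne
        · obtain rfl : r = Walk.nil := congrArg Subtype.val (Path.loop_eq ⟨r, hq.1⟩)
          simpa using hpair a b h
      · exact absurd (r.fst_mem_support_of_mem_edges (Sym2.eq_swap ▸ he)) hq.2
  · simpa using hnc a _ ((Walk.cons_isCycle_iff q h).2 ⟨hq, he⟩)

lemma walkWt_bypass_le [DecidableEq V] {u w : V} (p : G.Walk u w) :
    walkWt δ O s p.bypass ≤ walkWt δ O s p := by
  induction p with
  | nil => exact le_rfl
  | @cons a b c h p ih =>
    rw [Walk.bypass]
    split_ifs with ha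
    · have hsplit := congrArg (walkWt δ O s) (p.bypass.take_spec ha)
      rw [walkWt_append] at hsplit
      have := edgeWt_add_walkWt_path_nonneg hpair hnc h (p.bypass_isPath.takeUntil ha)
      rw [walkWt_cons]
      linarith
    · rw [walkWt_cons, walkWt_cons]
      linarith

end NonnegClosedWalks

lemma slowCondAt_of_forall_walk_le (hδsym : ∀ v w, G.Adj v w → δ v w = δ w v)
    (hOanti : ∀ v w, G.Adj v w → O v w = -O w v) {L : V → ℝ → ℝ} {x : ℝ} {n : ℕ} {v w : V}
    (p : G.Walk v w)
    (hmax : ∀ u (q : G.Walk v u), L u x - walkWt δ O n q ≤ L w x - walkWt δ O n p)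
    (hpos : 0 < L w x - L v x - walkWt δ O n p) :
    SlowCondAt G δ O L w x n := by
  constructor
  · cases p with
    | nil => simp at hpos
    | cons h r =>
      obtain ⟨u, q, hu, hq⟩ := Walk.exists_cons_eq_concat h r
      have := hmax u q
      rw [hq, walkWt_concat] at this
      simp only [edgeWt, hδsym u w hu, hOanti u w hu] at this
      exact ⟨u, hu.symm, by linarith⟩
  · intro u hu
    have := hmax u (p.concat hu)
    rw [walkWt_concat] at this
    simp only [edgeWt] at this
    linarith

instance (v : V) : Nonempty (Σ w, G.Path v w) := ⟨⟨v, Path.nil⟩⟩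

noncomputable def maxPathGain (G : SimpleGraph V) [Fintype V] [DecidableEq V] [DecidableRel G.Adj]
    (δ O : V → V → ℝ) (s : ℝ) (L : V → ℝ → ℝ) (v : V) (τ : ℝ) : ℝ :=
  Finset.univ.sup' Finset.univ_nonempty fun p : Σ w, G.Path v w => L p.1 τ - walkWt δ O s p.2.1

section MaxPathGain

variable [Fintype V] [DecidableEq V] [DecidableRel G.Adj] {L : V → ℝ → ℝ} {v : V} {τ : ℝ}
  (hpair : ∀ u v, G.Adj u v → 0 ≤ edgeWt δ O s u v + edgeWt δ O s v u)
  (hnc : NonnegCycles G δ O s)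
include hpair hnc

lemma sub_walkWt_le_maxPathGain {w : V} (p : G.Walk v w) :
    L w τ - walkWt δ O s p ≤ maxPathGain G δ O s L v τ :=
  calc L w τ - walkWt δ O s p ≤ L w τ - walkWt δ O s p.bypass := by
        linarith [walkWt_bypass_le hpair hnc p]
    _ ≤ maxPathGain G δ O s L v τ :=
        Finset.le_sup' (fun q : Σ w, G.Path v w => L q.1 τ - walkWt δ O s q.2.1)
          (Finset.mem_univ ⟨w, p.bypass, p.bypass_isPath⟩)

lemma Psi_eq_maxPathGain_sub : Psi G δ O s L v τ = maxPathGain G δ O s L v τ - L v τ := by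
  obtain ⟨⟨w, p⟩, -, hp⟩ := Finset.exists_mem_eq_sup' Finset.univ_nonempty
    fun q : Σ w, G.Path v w => L q.1 τ - walkWt δ O s q.2.1
  have hbdd : ∀ x ∈ {x : ℝ | ∃ w, ∃ p : G.Walk v w, x = L w τ - L v τ - walkWt δ O s p},
      x ≤ maxPathGain G δ O s L v τ - L v τ := by
    rintro x ⟨w, p, rfl⟩
    linarith [sub_walkWt_le_maxPathGain hpair hnc (L := L) (τ := τ) p]
  refine le_antisymm (csSup_le ⟨_, v, Walk.nil, rfl⟩ hbdd) (le_csSup ⟨_, hbdd⟩ ⟨w, p.1, ?_⟩)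
  rw [maxPathGain, hp]
  ring

end MaxPathGain

end GCS

theorem waitup_general
    {V : Type*} [Fintype V] [DecidableEq V]
    (G : SimpleGraph V)
    (δ O : V → V → ℝ)
    (hδpos : ∀ v w, G.Adj v w → 0 < δ v w)
    (hδsym : ∀ v w, G.Adj v w → δ v w = δ w v)
    (hOanti : ∀ v w, G.Adj v w → O v w = -O w v)
    (L : V → ℝ → ℝ) (ϑ μ : ℝ)
    (hdiff : ∀ v, Differentiable ℝ (L v))
    (hadm : GCS.Admissible G δ O L ϑ μ)
    (s : ℕ) (hnc : GCS.NonnegCycles G δ O (s : ℝ))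
    (v : V) (t t' : ℝ) (htt' : t < t')
    (hpos : ∀ τ ∈ Set.Ioo t t', 0 < GCS.Psi G δ O (s : ℝ) L v τ) :
    GCS.Psi G δ O (s : ℝ) L v t' ≤
      GCS.Psi G δ O (s : ℝ) L v t + ϑ * (t' - t) - (L v t' - L v t) := by
  classical
  have hpair : ∀ u w, G.Adj u w → 0 ≤ GCS.edgeWt δ O s u w + GCS.edgeWt δ O s w u :=
    fun _ _ => GCS.edgeWt_add_edgeWt_swap_nonneg hδpos hδsym hOanti s.cast_nonneg
  have hgain : GCS.maxPathGain G δ O s L v t' ≤ GCS.maxPathGain G δ O s L v t + ϑ * (t' - t) := by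
    refine finset_sup'_le_add_mul_sub Finset.univ_nonempty htt'
      (f := fun (p : Σ w, G.Path v w) τ => L p.1 τ - GCS.walkWt δ O s p.2.1)
      (fun p _ => ((hdiff p.1).sub_const _).continuous.continuousOn) ?_
    rintro x hx ⟨w, p, hp⟩ - hact
    change L w x - GCS.walkWt δ O s p = GCS.maxPathGain G δ O s L v x at hact
    refine ⟨((hdiff w).sub_const _).differentiableAt, ?_⟩
    rw [deriv_sub_const]
    refine (hadm w x).1 ⟨s, GCS.slowCondAt_of_forall_walk_le hδsym hOanti p (fun u q => ?_) ?_⟩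
    · exact hact ▸ GCS.sub_walkWt_le_maxPathGain hpair hnc q
    · have := hpos x hx
      rw [GCS.Psi_eq_maxPathGain_sub hpair hnc, ← hact] at this
      linarith
  rw [GCS.Psi_eq_maxPathGain_sub hpair hnc, GCS.Psi_eq_maxPathGain_sub hpair hnc]
  linarith

/-- if `Ψ_v^s` stays positive throughout `(t,t')`, then
`Ψ_v^s(t') ≤ Ψ_v^s(t) + ϑ(t'-t) - (L_v(t') - L_v(t))`. -/
theorem waitup
    {V : Type*} [Fintype V] [DecidableEq V] [Nonempty V]
    (G : SimpleGraph V) (hconn : G.Connected)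
    (δ O : V → V → ℝ)
    (hδpos : ∀ v w, G.Adj v w → 0 < δ v w)
    (hδsym : ∀ v w, G.Adj v w → δ v w = δ w v)
    (hOanti : ∀ v w, G.Adj v w → O v w = -O w v)
    (L : V → ℝ → ℝ) (ϑ μ : ℝ) (hϑ : 1 < ϑ) (hμ : 0 < μ)
    (hdiff : ∀ v, Differentiable ℝ (L v))
    (hlo : ∀ (v : V) (t : ℝ), 1 ≤ deriv (L v) t)
    (hhi : ∀ (v : V) (t : ℝ), deriv (L v) t ≤ ϑ * (1 + μ))
    (hadm : GCS.Admissible G δ O L ϑ μ)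
    (s : ℕ) (hnc : GCS.NonnegCycles G δ O (s : ℝ))
    (v : V) (t t' : ℝ) (htt' : t < t')
    (hpos : ∀ τ ∈ Set.Ioo t t', 0 < GCS.Psi G δ O (s : ℝ) L v τ) :
    GCS.Psi G δ O (s : ℝ) L v t' ≤
      GCS.Psi G δ O (s : ℝ) L v t + ϑ * (t' - t) - (L v t' - L v t) :=
  waitup_general G δ O hδpos hδsym hOanti L ϑ μ hdiff hadm s hnc v t t' htt' hpos
end

section
/- Let s₀ ∈ ℕ and assume every directed cycle has nonnegative ω^{s₀+1/2}-weight. Then for every integer s > s₀, 2·𝒲_δ ≤ 𝒲^s, where 𝒲_δ := max_{v,w∈V} d^δ(v,w) is the diameter of G with (undirected) edge lengths δ_{v,w}, and 𝒲^s := max_{v,w∈V} d^s(v,w). -/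
/-! Write `r = s₀ + 1/2`. Since `ω^s = ω^r + 4(s - r)δ`, a walk `p` from `v` to `w` and a walk `q`
back satisfy `ω^s(p) + ω^s(q) = ω^r(pq) + 4(s - r)(δ(p) + δ(q)) ≥ 2(δ(p) + δ(q)) ≥ 4 d^δ(v,w)`:
the closed walk `pq` has nonnegative `ω^r`-weight, because repeatedly cutting closed subwalks off
it (as `Walk.bypass` does) leaves only cycles and edges traversed back and forth, and
`ω^r(v,w) + ω^r(w,v) = 8rδ_{v,w} ≥ 0`. Hence `d^s(v,w) + d^s(w,v) ≥ 4 d^δ(v,w)`, and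
taking maxima gives `𝒲^s ≥ 2𝒲_δ`. -/

open SimpleGraph

namespace SimpleGraph.Walk

variable {V : Type*} {G : SimpleGraph V} {u v w : V}

def weight (ω : V → V → ℝ) (p : G.Walk u v) : ℝ :=
  (p.darts.map fun d => ω d.toProd.1 d.toProd.2).sum

variable {ω : V → V → ℝ}

@[simp] lemma weight_nil : (nil : G.Walk v v).weight ω = 0 := rfl

@[simp] lemma weight_cons (h : G.Adj u v) (p : G.Walk v w) :
    (cons h p).weight ω = ω u v + p.weight ω := by
  simp [weight]

@[simp] lemma weight_append (p : G.Walk u v) (q : G.Walk v w) :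
    (p.append q).weight ω = p.weight ω + q.weight ω := by
  simp [weight]

lemma weight_reverse (hω : ∀ v w, G.Adj v w → ω v w = ω w v) (p : G.Walk u v) :
    p.reverse.weight ω = p.weight ω := by
  induction p with
  | nil => rfl
  | cons h p ih => simp [ih, hω _ _ h, add_comm]

lemma weight_nonneg (hω : ∀ v w, G.Adj v w → 0 ≤ ω v w) (p : G.Walk u v) :
    0 ≤ p.weight ω := by
  induction p with
  | nil => rfl
  | cons h p ih => simpa using add_nonneg (hω _ _ h) ih

lemma weight_add_mul (ω' : V → V → ℝ) (c : ℝ) (p : G.Walk u v) :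
    p.weight (fun x y => ω x y + c * ω' x y) = p.weight ω + c * p.weight ω' := by
  induction p with
  | nil => simp
  | cons h p ih => simp only [weight_cons, ih]; ring

lemma weight_cons_nonneg_of_isPath (hback : ∀ v w, G.Adj v w → 0 ≤ ω v w + ω w v)
    (hcyc : ∀ v (c : G.Walk v v), c.IsCycle → 0 ≤ c.weight ω)
    (h : G.Adj u v) {p : G.Walk v u} (hp : p.IsPath) : 0 ≤ (cons h p).weight ω := by
  by_cases he : s(u, v) ∈ p.edges
  · rw [hp.eq_adj_toWalk_of_mem_edges (Sym2.eq_swap ▸ he)]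
    simpa [Adj.toWalk, add_comm] using hback u v h
  · exact hcyc u _ ((cons_isCycle_iff p h).mpr ⟨hp, he⟩)

lemma weight_bypass_le [DecidableEq V] (hback : ∀ v w, G.Adj v w → 0 ≤ ω v w + ω w v)
    (hcyc : ∀ v (c : G.Walk v v), c.IsCycle → 0 ≤ c.weight ω) (p : G.Walk u v) :
    p.bypass.weight ω ≤ p.weight ω := by
  induction p with
  | nil => rfl
  | @cons u x _ h p ih =>
    rw [bypass]
    split_ifs with hu
    · -- `bypass` cuts off the closed walk `cons h (p.bypass.takeUntil u hu)`, whose tail is a path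
      have hloop := weight_cons_nonneg_of_isPath hback hcyc h (p.bypass_isPath.takeUntil hu)
      have hsplit := congrArg (weight ω) (p.bypass.take_spec hu)
      simp only [weight_append, weight_cons] at hsplit hloop ⊢
      linarith
    · simpa using ih

lemma weight_nonneg_of_forall_isCycle (hback : ∀ v w, G.Adj v w → 0 ≤ ω v w + ω w v)
    (hcyc : ∀ v (c : G.Walk v v), c.IsCycle → 0 ≤ c.weight ω) (c : G.Walk v v) :
    0 ≤ c.weight ω := by
  classical
  simpa [(isPath_iff_nil.mp c.bypass_isPath).eq_nil] using weight_bypass_le hback hcyc c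

end SimpleGraph.Walk

namespace GCS

open Walk

variable {V : Type*} {G : SimpleGraph V} {δ O : V → V → ℝ} {v w : V}

lemma walkWt_eq_weight (s : ℝ) (p : G.Walk v w) : walkWt δ O s p = p.weight (edgeWt δ O s) :=
  rfl

lemma dS_eq_iInf (s : ℝ) (v w : V) : dS G δ O s v w = ⨅ p : G.Walk v w, walkWt δ O s p :=
  rfl

lemma walkWt_eq_add (s r : ℝ) (p : G.Walk v w) :
    walkWt δ O s p = walkWt δ O r p + 4 * (s - r) * p.weight δ := by
  rw [walkWt_eq_weight, walkWt_eq_weight, ← weight_add_mul]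
  congr 1
  funext x y
  simp only [edgeWt]
  ring

lemma NonnegCycles.walkWt_nonneg {r : ℝ} (hnc : NonnegCycles G δ O r) (hr : 0 ≤ r)
    (hδ : ∀ v w, G.Adj v w → 0 ≤ δ v w) (hδsym : ∀ v w, G.Adj v w → δ v w = δ w v)
    (hOanti : ∀ v w, G.Adj v w → O v w = -O w v) (c : G.Walk v v) :
    0 ≤ walkWt δ O r c := by
  refine weight_nonneg_of_forall_isCycle (fun x y hxy => ?_) hnc c
  have := mul_nonneg hr (hδ x y hxy)
  simp only [edgeWt, hδsym x y hxy, hOanti x y hxy] at this ⊢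
  linarith

lemma two_mul_weight_add_le_walkWt_add {r s : ℝ} (hnc : NonnegCycles G δ O r) (hr : 0 ≤ r)
    (hrs : r + 1 / 2 ≤ s) (hδ : ∀ v w, G.Adj v w → 0 ≤ δ v w)
    (hδsym : ∀ v w, G.Adj v w → δ v w = δ w v) (hOanti : ∀ v w, G.Adj v w → O v w = -O w v)
    (p : G.Walk v w) (q : G.Walk w v) :
    2 * (p.weight δ + q.weight δ) ≤ walkWt δ O s p + walkWt δ O s q := by
  have hcirc : 0 ≤ walkWt δ O r p + walkWt δ O r q := by
    simpa [walkWt_eq_weight] using hnc.walkWt_nonneg hr hδ hδsym hOanti (p.append q)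
  have hlen : 0 ≤ (4 * (s - r) - 2) * (p.weight δ + q.weight δ) :=
    mul_nonneg (by linarith) (add_nonneg (weight_nonneg hδ p) (weight_nonneg hδ q))
  rw [walkWt_eq_add s r p, walkWt_eq_add s r q]
  linarith

lemma four_mul_iInf_weight_le_dS_add_dS {r s : ℝ} (hnc : NonnegCycles G δ O r) (hr : 0 ≤ r)
    (hrs : r + 1 / 2 ≤ s) (hδ : ∀ v w, G.Adj v w → 0 ≤ δ v w)
    (hδsym : ∀ v w, G.Adj v w → δ v w = δ w v) (hOanti : ∀ v w, G.Adj v w → O v w = -O w v)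
    (hvw : G.Reachable v w) :
    4 * ⨅ p : G.Walk v w, p.weight δ ≤ dS G δ O s v w + dS G δ O s w v := by
  have : Nonempty (G.Walk v w) := hvw
  have : Nonempty (G.Walk w v) := hvw.symm
  rw [dS_eq_iInf, dS_eq_iInf]
  set D := ⨅ p : G.Walk v w, p.weight δ
  have hD (p : G.Walk v w) : D ≤ p.weight δ :=
    ciInf_le ⟨0, by rintro _ ⟨p, rfl⟩; exact weight_nonneg hδ p⟩ p
  have hpq (p : G.Walk v w) (q : G.Walk w v) : 4 * D ≤ walkWt δ O s p + walkWt δ O s q := by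
    have hq := hD q.reverse
    rw [weight_reverse hδsym] at hq
    linarith [hD p, two_mul_weight_add_le_walkWt_add hnc hr hrs hδ hδsym hOanti p q]
  have hp (p : G.Walk v w) : 4 * D - walkWt δ O s p ≤ ⨅ q : G.Walk w v, walkWt δ O s q :=
    le_ciInf fun q => by linarith [hpq p q]
  have : 4 * D - ⨅ q : G.Walk w v, walkWt δ O s q ≤ ⨅ p : G.Walk v w, walkWt δ O s p :=
    le_ciInf fun p => by linarith [hp p]
  linarith

end GCS

theorem Wdelta_le_Ws_general
    {V : Type*} [Fintype V] [Nonempty V]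
    (G : SimpleGraph V) (hconn : G.Connected)
    (δ O : V → V → ℝ)
    (hδpos : ∀ v w, G.Adj v w → 0 < δ v w)
    (hδsym : ∀ v w, G.Adj v w → δ v w = δ w v)
    (hOanti : ∀ v w, G.Adj v w → O v w = -O w v)
    (s₀ : ℕ) (hnc : GCS.NonnegCycles G δ O ((s₀ : ℝ) + 1/2))
    (s : ℕ) (hs : s₀ < s) :
    2 * (⨆ v : V, ⨆ w : V,
          sInf {x : ℝ | ∃ p : G.Walk v w,
            (p.darts.map fun d => δ d.toProd.1 d.toProd.2).sum = x}) ≤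
      ⨆ v : V, ⨆ w : V, GCS.dS G δ O (s : ℝ) v w := by
  set W := ⨆ v : V, ⨆ w : V, GCS.dS G δ O (s : ℝ) v w
  have hW (v w : V) : GCS.dS G δ O s v w ≤ W :=
    le_ciSup_of_le (Finite.bddAbove_range _) v (le_ciSup (Finite.bddAbove_range _) w)
  have hrs : (s₀ : ℝ) + 1 / 2 + 1 / 2 ≤ s := by
    have : (s₀ : ℝ) + 1 ≤ s := by exact_mod_cast hs
    linarith
  have hkey (v w : V) := GCS.four_mul_iInf_weight_le_dS_add_dS hnc (by positivity) hrs
    (fun v w h => (hδpos v w h).le) hδsym hOanti (hconn.preconnected v w)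
  have hdiam : ⨆ v : V, ⨆ w : V, ⨅ p : G.Walk v w, p.weight δ ≤ W / 2 :=
    ciSup_le fun v => ciSup_le fun w => by linarith [hkey v w, hW v w, hW w v]
  change 2 * ⨆ v : V, ⨆ w : V, ⨅ p : G.Walk v w, p.weight δ ≤ W
  linarith

/-- `2𝒲_δ ≤ 𝒲^s` for every integer `s > s₀`, where `𝒲_δ` is the
diameter of `G` with edge lengths `δ` and `𝒲^s = max_{v,w} d^s(v,w)`. -/
theorem Wdelta_le_Ws
    {V : Type*} [Fintype V] [DecidableEq V] [Nonempty V]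
    (G : SimpleGraph V) (hconn : G.Connected)
    (δ O : V → V → ℝ)
    (hδpos : ∀ v w, G.Adj v w → 0 < δ v w)
    (hδsym : ∀ v w, G.Adj v w → δ v w = δ w v)
    (hOanti : ∀ v w, G.Adj v w → O v w = -O w v)
    (s₀ : ℕ) (hnc : GCS.NonnegCycles G δ O ((s₀ : ℝ) + 1/2))
    (s : ℕ) (hs : s₀ < s) :
    2 * (⨆ v : V, ⨆ w : V,
          sInf {x : ℝ | ∃ p : G.Walk v w,
            (p.darts.map fun d => δ d.toProd.1 d.toProd.2).sum = x}) ≤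
      ⨆ v : V, ⨆ w : V, GCS.dS G δ O (s : ℝ) v w :=
  Wdelta_le_Ws_general G hconn δ O hδpos hδsym hOanti s₀ hnc s hs
end

section
/- Fix a time t, and suppose that for every ordered pair (v,w) of adjacent nodes the estimate o_{v,w}(t) has error e_{v,w}(t) := L_v(t) − L_w(t) − o_{v,w}(t) satisfying |e_{v,w}(t) − O_{v,w}| < δ_{v,w}. For s ∈ (1/2)·ℕ define Ψ̃^{s+1/4}(t) := sup over all pairs v,w ∈ V and all walks v₀,…,v_ℓ from v to w (including empty walks) of Σ_{i=1}^ℓ (o_{v_{i−1},v_i}(t) − (4s+1)·δ_{v_{i−1},v_i}). Then Ψ^{s+1/2}(t) ≤ Ψ̃^{s+1/4}(t) ≤ Ψ^s(t). -/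
open SimpleGraph

/-!
For an edge `(a, b)`, the estimate error bound gives
`ℓ b - ℓ a - ω^{s+1/2}(a, b) ≤ o b a - (4s+1) δ ≤ ℓ b - ℓ a - ω^s(a, b)`,
using that `δ` is symmetric and `O` antisymmetric. Summed along a walk the clock differences
telescope, so reversing a walk turns a term of `Ψ^{s+1/2}` into a term of `Ψ̃^{s+1/4}`, and a
term of `Ψ̃^{s+1/4}` into a term of `Ψ^s`.
-/

namespace SimpleGraph.Walk

variable {V : Type*} {G : SimpleGraph V}

theorem sum_map_darts_reverse (f : V → V → ℝ) {v w : V} (p : G.Walk v w) :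
    (p.reverse.darts.map fun d => f d.toProd.1 d.toProd.2).sum =
      (p.darts.map fun d => f d.toProd.2 d.toProd.1).sum := by
  rw [darts_reverse, List.map_reverse, List.sum_reverse, List.map_map]
  rfl

theorem sum_map_darts_le (f g : V → V → ℝ) (hfg : ∀ a b, G.Adj a b → f a b ≤ g a b)
    {v w : V} (p : G.Walk v w) :
    (p.darts.map fun d => f d.toProd.1 d.toProd.2).sum ≤
      (p.darts.map fun d => g d.toProd.1 d.toProd.2).sum :=
  List.sum_le_sum fun d _ => hfg _ _ d.adj

end SimpleGraph.Walk

namespace GCS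

variable {V : Type*} {G : SimpleGraph V}

def estimateWt (δ o : V → V → ℝ) (s : ℝ) {v w : V} (p : G.Walk v w) : ℝ :=
  (p.darts.map fun d => o d.toProd.1 d.toProd.2 - (4 * s + 1) * δ d.toProd.1 d.toProd.2).sum

theorem sub_sub_walkWt_eq_sum (δ O : V → V → ℝ) (s : ℝ) (ℓ : V → ℝ) {v w : V}
    (p : G.Walk v w) :
    ℓ w - ℓ v - walkWt δ O s p =
      (p.darts.map fun d =>
        ℓ d.toProd.2 - ℓ d.toProd.1 - edgeWt δ O s d.toProd.1 d.toProd.2).sum := by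
  induction p with
  | nil => simp [walkWt]
  | cons h q ih =>
    simp only [walkWt, Walk.darts_cons, List.map_cons, List.sum_cons] at ih ⊢
    linarith

variable {δ O o : V → V → ℝ} {ℓ : V → ℝ}

theorem sub_sub_walkWt_add_half_le_estimateWt_reverse
    (hδsym : ∀ v w, G.Adj v w → δ v w = δ w v)
    (hOanti : ∀ v w, G.Adj v w → O v w = -O w v)
    (herr : ∀ v w, G.Adj v w → (ℓ v - ℓ w - o v w) - O v w < δ v w)
    (s : ℝ) {v w : V} (p : G.Walk v w) :
    ℓ w - ℓ v - walkWt δ O (s + 1/2) p ≤ estimateWt δ o s p.reverse := by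
  rw [sub_sub_walkWt_eq_sum, estimateWt,
    Walk.sum_map_darts_reverse (fun a b => o a b - (4 * s + 1) * δ a b)]
  refine Walk.sum_map_darts_le (fun a b => ℓ b - ℓ a - edgeWt δ O (s + 1/2) a b)
    (fun a b => o b a - (4 * s + 1) * δ b a) (fun a b hab => ?_) p
  have := herr b a hab.symm
  simp only [edgeWt, hδsym a b hab, hOanti a b hab] at this ⊢
  linarith

theorem estimateWt_le_sub_sub_walkWt_reverse
    (hδsym : ∀ v w, G.Adj v w → δ v w = δ w v)
    (hOanti : ∀ v w, G.Adj v w → O v w = -O w v)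
    (herr : ∀ v w, G.Adj v w → -δ v w < (ℓ v - ℓ w - o v w) - O v w)
    (s : ℝ) {v w : V} (p : G.Walk v w) :
    estimateWt δ o s p ≤ ℓ v - ℓ w - walkWt δ O s p.reverse := by
  rw [sub_sub_walkWt_eq_sum, Walk.sum_map_darts_reverse
    (fun a b => ℓ b - ℓ a - edgeWt δ O s a b), estimateWt]
  refine Walk.sum_map_darts_le (fun a b => o a b - (4 * s + 1) * δ a b)
    (fun a b => ℓ a - ℓ b - edgeWt δ O s b a) (fun a b hab => ?_) p
  have := herr a b hab
  simp only [edgeWt, hδsym a b hab, hOanti a b hab] at this ⊢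
  linarith

end GCS

theorem estimate_potential_squeeze_general
    {V : Type*}
    (G : SimpleGraph V)
    (δ O : V → V → ℝ)
    (hδsym : ∀ v w, G.Adj v w → δ v w = δ w v)
    (hOanti : ∀ v w, G.Adj v w → O v w = -O w v)
    (L : V → ℝ → ℝ) (o : V → V → ℝ) (t : ℝ)
    (herr : ∀ v w, G.Adj v w → |(L v t - L w t - o v w) - O v w| < δ v w)
    (s : ℝ) :
    (⨆ v : V, GCS.PsiE G δ O (s + 1/2) L v t) ≤
      (⨆ v : V, ⨆ w : V, ⨆ p : G.Walk v w,
        (((p.darts.map fun d =>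
            o d.toProd.1 d.toProd.2 - (4 * s + 1) * δ d.toProd.1 d.toProd.2).sum : ℝ)
          : EReal)) ∧
    (⨆ v : V, ⨆ w : V, ⨆ p : G.Walk v w,
        (((p.darts.map fun d =>
            o d.toProd.1 d.toProd.2 - (4 * s + 1) * δ d.toProd.1 d.toProd.2).sum : ℝ)
          : EReal)) ≤
      ⨆ v : V, GCS.PsiE G δ O s L v t := by
  have herr_lt v w (h : G.Adj v w) := (abs_lt.mp (herr v w h)).2
  have herr_gt v w (h : G.Adj v w) := (abs_lt.mp (herr v w h)).1
  constructor
  · refine iSup_le fun v => iSup_le fun w => iSup_le fun p => ?_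
    refine (EReal.coe_le_coe_iff.mpr <| GCS.sub_sub_walkWt_add_half_le_estimateWt_reverse
      (ℓ := (L · t)) hδsym hOanti herr_lt s p).trans ?_
    exact le_iSup_of_le w <| le_iSup_of_le v <| le_iSup_of_le p.reverse le_rfl
  · refine iSup_le fun v => iSup_le fun w => iSup_le fun p => ?_
    refine (EReal.coe_le_coe_iff.mpr <| GCS.estimateWt_le_sub_sub_walkWt_reverse
      (ℓ := (L · t)) hδsym hOanti herr_gt s p).trans ?_
    exact le_iSup_of_le w <| le_iSup_of_le v <| le_iSup_of_le p.reverse le_rfl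

/-- `Ψ^{s+1/2}(t) ≤ Ψ̃^{s+1/4}(t) ≤ Ψ^s(t)` for the estimate-based
potential `Ψ̃^{s+1/4}(t) = sup over walks of Σ (o_{v_{i-1},v_i}(t) - (4s+1)δ)`. -/
theorem estimate_potential_squeeze
    {V : Type*} [Fintype V] [DecidableEq V] [Nonempty V]
    (G : SimpleGraph V) (hconn : G.Connected)
    (δ O : V → V → ℝ)
    (hδpos : ∀ v w, G.Adj v w → 0 < δ v w)
    (hδsym : ∀ v w, G.Adj v w → δ v w = δ w v)
    (hOanti : ∀ v w, G.Adj v w → O v w = -O w v)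
    (L : V → ℝ → ℝ) (o : V → V → ℝ) (t : ℝ)
    (herr : ∀ v w, G.Adj v w → |(L v t - L w t - o v w) - O v w| < δ v w)
    (s : ℝ) (hs : ∃ n : ℕ, 2 * s = (n : ℝ)) :
    (⨆ v : V, GCS.PsiE G δ O (s + 1/2) L v t) ≤
      (⨆ v : V, ⨆ w : V, ⨆ p : G.Walk v w,
        (((p.darts.map fun d =>
            o d.toProd.1 d.toProd.2 - (4 * s + 1) * δ d.toProd.1 d.toProd.2).sum : ℝ)
          : EReal)) ∧
    (⨆ v : V, ⨆ w : V, ⨆ p : G.Walk v w,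
        (((p.darts.map fun d =>
            o d.toProd.1 d.toProd.2 - (4 * s + 1) * δ d.toProd.1 d.toProd.2).sum : ℝ)
          : EReal)) ≤
      ⨆ v : V, GCS.PsiE G δ O s L v t :=
  estimate_potential_squeeze_general G δ O hδsym hOanti L o t herr s
end
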